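/- arXiv:2306.12889 — 6 statements merged into one kernel-verified Lean document; each statement's English description precedes it below -/
import Mathlib

section
/- For every index i in {0,...,κ-1}, if α lies in the interval [A_i, A_{i+1}) (with A_κ = +∞), then the generalized survival function satisfies μ_𝒜(x, α) = min_{k ≤ i} μ(E_k^c). -/
open scoped Classical

/-- `𝒜` is a family of conditional aggregation operators (FCA) with respect to the
collection `𝓔`: every operator is nonnegative, monotone in the coordinates of the
conditioning set, vanishes on the indicator of the complement, and `𝒜(·|∅) = 0`. -/
def IsFCA (n : ℕ) (𝓔 : Finset (Finset (Fin n)))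
    (𝒜 : Finset (Fin n) → (Fin n → ℝ) → ℝ) : Prop :=
  (∀ E ∈ 𝓔, ∀ x : Fin n → ℝ, 0 ≤ 𝒜 E x) ∧
  (∀ E ∈ 𝓔, E ≠ ∅ → ∀ x y : Fin n → ℝ, (∀ i ∈ E, x i ≤ y i) → 𝒜 E x ≤ 𝒜 E y) ∧
  (∀ E ∈ 𝓔, E ≠ ∅ → 𝒜 E (fun i => if i ∈ E then 0 else 1) = 0) ∧
  (∀ x : Fin n → ℝ, 𝒜 ∅ x = 0)

/-- `μ` is a monotone measure on the complements of the sets of `𝓔`: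
`μ ∅ = 0`, nonnegative, and monotone. -/
def IsMonMeasure (n : ℕ) (𝓔 : Finset (Finset (Fin n)))
    (μ : Finset (Fin n) → ℝ) : Prop :=
  μ ∅ = 0 ∧ (∀ E ∈ 𝓔, 0 ≤ μ Eᶜ) ∧
  (∀ E ∈ 𝓔, ∀ F ∈ 𝓔, Eᶜ ⊆ Fᶜ → μ Eᶜ ≤ μ Fᶜ)

/-- The generalized survival function
`μ_𝒜(x, α) = min { μ(Eᶜ) : 𝒜(x|E) ≤ α, E ∈ 𝓔 }`. -/
noncomputable def gsf {n : ℕ} (𝓔 : Finset (Finset (Fin n)))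
    (𝒜 : Finset (Fin n) → (Fin n → ℝ) → ℝ)
    (μ : Finset (Fin n) → ℝ) (x : Fin n → ℝ) (α : ℝ) : ℝ :=
  sInf {m : ℝ | ∃ E ∈ 𝓔, 𝒜 E x ≤ α ∧ m = μ Eᶜ}

/-! Since `Estar` enumerates `𝓔` and `k ↦ 𝒜(x|E_k)` is sorted, the sets `E ∈ 𝓔` with `𝒜(x|E) ≤ α`
are exactly `E_0, …, E_i`, so both infima run over the same values. -/

theorem Finset.exists_fin_eq_of_injective_of_card_eq {α : Type*} {κ : ℕ} {s : Finset α}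
    {f : Fin κ → α} (hmem : ∀ k, f k ∈ s) (hinj : Function.Injective f) (hcard : s.card = κ) :
    ∀ a ∈ s, ∃ k, f k = a := by
  intro a ha
  obtain ⟨k, -, hk⟩ := Finset.surjOn_of_injOn_of_card_le (s := Finset.univ) f
    (fun k _ => hmem k) hinj.injOn (by simp [hcard]) ha
  exact ⟨k, hk⟩

theorem Monotone.fin_apply_le_iff_le {β : Type*} [Preorder β] {κ : ℕ} {f : Fin κ → β}
    (hf : Monotone f) {i : Fin κ} {α : β} (hle : f i ≤ α)
    (hlt : ∀ h : (i : ℕ) + 1 < κ, α < f ⟨(i : ℕ) + 1, h⟩) (k : Fin κ) :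
    f k ≤ α ↔ k ≤ i := by
  refine ⟨fun hk => ?_, fun hki => (hf hki).trans hle⟩
  by_contra! hik
  have hsucc : (i : ℕ) + 1 < κ := lt_of_le_of_lt hik k.isLt
  exact lt_irrefl α ((hlt hsucc).trans_le ((hf (show ⟨(i : ℕ) + 1, hsucc⟩ ≤ k from hik)).trans hk))

theorem stmt0_general {n κ : ℕ} (𝓔 : Finset (Finset (Fin n)))
    (𝒜 : Finset (Fin n) → (Fin n → ℝ) → ℝ) (μ : Finset (Fin n) → ℝ)
    (x : Fin n → ℝ)
    (hκ : 𝓔.card = κ)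
    (Estar : Fin κ → Finset (Fin n))
    (hmem : ∀ i, Estar i ∈ 𝓔) (hinj : Function.Injective Estar)
    (hAmono : ∀ i j : Fin κ, i ≤ j → 𝒜 (Estar i) x ≤ 𝒜 (Estar j) x)
    (i : Fin κ) (α : ℝ)
    (hα₁ : 𝒜 (Estar i) x ≤ α)
    (hα₂ : ∀ h : (i : ℕ) + 1 < κ, α < 𝒜 (Estar ⟨(i : ℕ) + 1, h⟩) x) :
    gsf 𝓔 𝒜 μ x α = sInf {m : ℝ | ∃ k : Fin κ, k ≤ i ∧ m = μ (Estar k)ᶜ} := by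
  have hsurj := Finset.exists_fin_eq_of_injective_of_card_eq hmem hinj hκ
  have hle_iff := Monotone.fin_apply_le_iff_le (f := fun k => 𝒜 (Estar k) x) hAmono hα₁ hα₂
  unfold gsf
  congr 1
  ext m
  constructor
  · rintro ⟨E, hE, hle, rfl⟩
    obtain ⟨k, rfl⟩ := hsurj E hE
    exact ⟨k, (hle_iff k).mp hle, rfl⟩
  · rintro ⟨k, hk, rfl⟩
    exact ⟨Estar k, hmem k, (hle_iff k).mpr hk, rfl⟩

/-- Theorem (zjednodusenie_def (i)): if `α ∈ [A_i, A_{i+1})` (with `A_κ = +∞`), then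
`μ_𝒜(x, α) = min_{k ≤ i} μ(E_kᶜ)`. -/
theorem stmt0 {n κ : ℕ} (𝓔 : Finset (Finset (Fin n)))
    (𝒜 : Finset (Fin n) → (Fin n → ℝ) → ℝ) (μ : Finset (Fin n) → ℝ)
    (x : Fin n → ℝ)
    (hempty : ∅ ∈ 𝓔) (hU : (Finset.univ : Finset (Fin n)) ∈ 𝓔)
    (hA : IsFCA n 𝓔 𝒜) (hμ : IsMonMeasure n 𝓔 μ) (hx : ∀ i, 0 ≤ x i)
    (hκ : 𝓔.card = κ)
    (Estar : Fin κ → Finset (Fin n))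
    (hmem : ∀ i, Estar i ∈ 𝓔) (hinj : Function.Injective Estar)
    (hAmono : ∀ i j : Fin κ, i ≤ j → 𝒜 (Estar i) x ≤ 𝒜 (Estar j) x)
    (i : Fin κ) (α : ℝ)
    (hα₁ : 𝒜 (Estar i) x ≤ α)
    (hα₂ : ∀ h : (i : ℕ) + 1 < κ, α < 𝒜 (Estar ⟨(i : ℕ) + 1, h⟩) x) :
    gsf 𝓔 𝒜 μ x α = sInf {m : ℝ | ∃ k : Fin κ, k ≤ i ∧ m = μ (Estar k)ᶜ} :=
  stmt0_general 𝓔 𝒜 μ x hκ Estar hmem hinj hAmono i α hα₁ hα₂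
end

section
/- The generalized survival function admits the representation μ_𝒜(x, α) = Σ_{i=0}^{κ-1} (min_{k ≤ i} μ(E_k^c)) · 1_{[A_i, A_{i+1})}(α) for every α ∈ [0, ∞), where A_κ = +∞. -/
open scoped Classical

/-! The sum collapses: since `A` is monotone and `A_0 = 𝒜(x|∅) = 0 ≤ α`, the intervals
`[A_i, A_{i+1})` partition `[0, ∞)` and `α` lies in exactly the one indexed by the last `i₀`
with `A_{i₀} ≤ α`. The sets `E` with `𝒜(x|E) ≤ α` are then exactly `E_0, …, E_{i₀}`, so the
surviving coefficient `min_{k ≤ i₀} μ(E_kᶜ)` is the generalized survival function. -/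

section StepIndicator

variable {κ : ℕ} (a : Fin κ → ℝ)

noncomputable def stepIndicator (i : Fin κ) (α : ℝ) : ℝ :=
  if h : (i : ℕ) + 1 < κ then
    Set.indicator (Set.Ico (a i) (a ⟨(i : ℕ) + 1, h⟩)) (fun _ => (1 : ℝ)) α
  else
    Set.indicator (Set.Ici (a i)) (fun _ => (1 : ℝ)) α

variable {a} {i₀ : Fin κ} {α : ℝ}

theorem stepIndicator_eq_ite (ha : Monotone a) (hi₀ : a i₀ ≤ α)
    (hmax : ∀ k, a k ≤ α → k ≤ i₀) (i : Fin κ) :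
    stepIndicator a i α = if i = i₀ then 1 else 0 := by
  have hgt : ∀ k, i₀ < k → α < a k := fun k hk => lt_of_not_ge fun h => (hmax k h).not_gt hk
  unfold stepIndicator
  rcases lt_trichotomy i i₀ with hlt | rfl | hlt
  · have hnext : (i : ℕ) + 1 < κ := lt_of_le_of_lt hlt i₀.isLt
    have hle : a ⟨(i : ℕ) + 1, hnext⟩ ≤ α := (ha (Fin.mk_le_of_le_val hlt)).trans hi₀
    rw [if_neg hlt.ne, dif_pos hnext]
    exact Set.indicator_of_notMem (fun h => h.2.not_ge hle) _
  · rw [if_pos rfl]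
    split_ifs with hnext
    · exact Set.indicator_of_mem
        (Set.mem_Ico.mpr ⟨hi₀, hgt _ (Fin.lt_def.mpr (Nat.lt_succ_self _))⟩) _
    · exact Set.indicator_of_mem (Set.mem_Ici.mpr hi₀) _
  · have hα := hgt i hlt
    rw [if_neg hlt.ne']
    split_ifs
    · exact Set.indicator_of_notMem (fun h => h.1.not_gt hα) _
    · exact Set.indicator_of_notMem (fun h => (Set.mem_Ici.mp h).not_gt hα) _

theorem sum_mul_stepIndicator (f : Fin κ → ℝ) (ha : Monotone a) (hi₀ : a i₀ ≤ α)
    (hmax : ∀ k, a k ≤ α → k ≤ i₀) :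
    ∑ i, f i * stepIndicator a i α = f i₀ := by
  simp [stepIndicator_eq_ite ha hi₀ hmax]

end StepIndicator

theorem gsf_eq_sInf_prefix {n κ : ℕ} {𝓔 : Finset (Finset (Fin n))}
    {𝒜 : Finset (Fin n) → (Fin n → ℝ) → ℝ} {μ : Finset (Fin n) → ℝ} {x : Fin n → ℝ}
    {Estar : Fin κ → Finset (Fin n)} {i₀ : Fin κ} {α : ℝ}
    (hsurj : Set.SurjOn Estar Set.univ 𝓔) (hmem : ∀ i, Estar i ∈ 𝓔)
    (hAmono : Monotone fun i => 𝒜 (Estar i) x) (hi₀ : 𝒜 (Estar i₀) x ≤ α)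
    (hmax : ∀ k, 𝒜 (Estar k) x ≤ α → k ≤ i₀) :
    gsf 𝓔 𝒜 μ x α = sInf {m : ℝ | ∃ k : Fin κ, k ≤ i₀ ∧ m = μ (Estar k)ᶜ} := by
  unfold gsf
  congr 1
  ext m
  constructor
  · rintro ⟨E, hE, hEα, rfl⟩
    obtain ⟨k, -, rfl⟩ := hsurj hE
    exact ⟨k, hmax k hEα, rfl⟩
  · rintro ⟨k, hk, rfl⟩
    exact ⟨Estar k, hmem k, (hAmono hk).trans hi₀, rfl⟩

theorem stmt1_general {n κ : ℕ} (𝓔 : Finset (Finset (Fin n)))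
    (𝒜 : Finset (Fin n) → (Fin n → ℝ) → ℝ) (μ : Finset (Fin n) → ℝ)
    (x : Fin n → ℝ)
    (hempty : ∅ ∈ 𝓔)
    (hA : IsFCA n 𝓔 𝒜)
    (hκ : 𝓔.card = κ)
    (Estar : Fin κ → Finset (Fin n))
    (hmem : ∀ i, Estar i ∈ 𝓔) (hinj : Function.Injective Estar)
    (hAmono : ∀ i j : Fin κ, i ≤ j → 𝒜 (Estar i) x ≤ 𝒜 (Estar j) x)
    (α : ℝ) (hα : 0 ≤ α) :
    gsf 𝓔 𝒜 μ x α =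
      ∑ i : Fin κ,
        (sInf {m : ℝ | ∃ k : Fin κ, k ≤ i ∧ m = μ (Estar k)ᶜ}) *
          (if h : (i : ℕ) + 1 < κ then
            Set.indicator
              (Set.Ico (𝒜 (Estar i) x) (𝒜 (Estar ⟨(i : ℕ) + 1, h⟩) x))
              (fun _ => (1 : ℝ)) α
          else
            Set.indicator (Set.Ici (𝒜 (Estar i) x)) (fun _ => (1 : ℝ)) α) := by
  have hsurj : Set.SurjOn Estar Set.univ 𝓔 := by
    simpa using Finset.surjOn_of_injOn_of_card_le (s := Finset.univ) Estar (fun k _ => hmem k)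
      hinj.injOn (by simp [hκ])
  obtain ⟨i₀, hi₀, hmax⟩ : ∃ i₀ : Fin κ, 𝒜 (Estar i₀) x ≤ α ∧
      ∀ k, 𝒜 (Estar k) x ≤ α → k ≤ i₀ := by
    obtain ⟨k₀, -, hk₀⟩ := hsurj hempty
    obtain ⟨i₀, hi₀, hmax⟩ := (Finset.univ.filter fun k => 𝒜 (Estar k) x ≤ α).exists_max_image
      id ⟨k₀, by simpa [hk₀, hA.2.2.2 x] using hα⟩
    exact ⟨i₀, (Finset.mem_filter.mp hi₀).2, fun k hk => hmax k (by simpa using hk)⟩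
  rw [gsf_eq_sInf_prefix hsurj hmem hAmono hi₀ hmax]
  exact (sum_mul_stepIndicator (fun i => sInf {m : ℝ | ∃ k : Fin κ, k ≤ i ∧ m = μ (Estar k)ᶜ})
    hAmono hi₀ hmax).symm

/-- Theorem (zjednodusenie_def (ii)): the generalized survival function equals
`Σ_{i=0}^{κ-1} (min_{k ≤ i} μ(E_kᶜ)) · 1_{[A_i, A_{i+1})}(α)`, with `A_κ = +∞`
(so the last interval is `[A_{κ-1}, ∞)`). -/
theorem stmt1 {n κ : ℕ} (𝓔 : Finset (Finset (Fin n)))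
    (𝒜 : Finset (Fin n) → (Fin n → ℝ) → ℝ) (μ : Finset (Fin n) → ℝ)
    (x : Fin n → ℝ)
    (hempty : ∅ ∈ 𝓔) (hU : (Finset.univ : Finset (Fin n)) ∈ 𝓔)
    (hA : IsFCA n 𝓔 𝒜) (hμ : IsMonMeasure n 𝓔 μ) (hx : ∀ i, 0 ≤ x i)
    (hκ : 𝓔.card = κ)
    (Estar : Fin κ → Finset (Fin n))
    (hmem : ∀ i, Estar i ∈ 𝓔) (hinj : Function.Injective Estar)
    (hAmono : ∀ i j : Fin κ, i ≤ j → 𝒜 (Estar i) x ≤ 𝒜 (Estar j) x)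
    (α : ℝ) (hα : 0 ≤ α) :
    gsf 𝓔 𝒜 μ x α =
      ∑ i : Fin κ,
        (sInf {m : ℝ | ∃ k : Fin κ, k ≤ i ∧ m = μ (Estar k)ᶜ}) *
          (if h : (i : ℕ) + 1 < κ then
            Set.indicator
              (Set.Ico (𝒜 (Estar i) x) (𝒜 (Estar ⟨(i : ℕ) + 1, h⟩) x))
              (fun _ => (1 : ℝ)) α
          else
            Set.indicator (Set.Ici (𝒜 (Estar i) x)) (fun _ => (1 : ℝ)) α) :=
  stmt1_general 𝓔 𝒜 μ x hempty hA hκ Estar hmem hinj hAmono α hα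
end

section
/- For every j ∈ {0,...,κ-1} and every α in the interval [min_{k ≤ j} A_{⟨k⟩}, min_{k < j} A_{⟨k⟩}) (with min over the empty set equal to +∞), the generalized survival function satisfies μ_𝒜(x, α) = μ_j. -/
open scoped Classical

/-! Since `k ↦ F_kᶜ` enumerates `𝓔`, the sets `E ∈ 𝓔` with `𝒜(x|E) ≤ α` are exactly the `F_kᶜ`
with `k ≥ j`: the upper bound on `α` excludes every `k < j`, and the lower bound, whose minimum
is attained at some `k ≤ j`, then forces `𝒜(x|F_jᶜ) ≤ α`. Monotonicity of `k ↦ μ_k` makes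
`μ_j` the least admissible value. -/

theorem apply_le_of_sInf_le_of_forall_lt {ι β : Type*} [Finite ι] [LinearOrder ι]
    [ConditionallyCompleteLinearOrder β] (g : ι → β) (j : ι) {α : β}
    (h₁ : sInf {m : β | ∃ k : ι, k ≤ j ∧ m = g k} ≤ α) (h₂ : ∀ k : ι, k < j → α < g k) :
    g j ≤ α := by
  have hne : {m : β | ∃ k : ι, k ≤ j ∧ m = g k}.Nonempty := ⟨g j, j, le_rfl, rfl⟩
  have hfin : {m : β | ∃ k : ι, k ≤ j ∧ m = g k}.Finite :=
    (Set.finite_range g).subset fun _ ⟨k, _, hk⟩ => ⟨k, hk.symm⟩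
  obtain ⟨k, hkj, hk⟩ := hne.csInf_mem hfin
  rw [hk] at h₁
  rcases hkj.lt_or_eq with hlt | rfl
  · exact absurd h₁ (h₂ k hlt).not_ge
  · exact h₁

theorem stmt2_general {n κ : ℕ} (𝓔 : Finset (Finset (Fin n)))
    (𝒜 : Finset (Fin n) → (Fin n → ℝ) → ℝ) (μ : Finset (Fin n) → ℝ)
    (x : Fin n → ℝ)
    (hκ : 𝓔.card = κ)
    (Fstar : Fin κ → Finset (Fin n))
    (hFmem : ∀ j, (Fstar j)ᶜ ∈ 𝓔) (hFinj : Function.Injective Fstar)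
    (hμmono : ∀ i j : Fin κ, i ≤ j → μ (Fstar i) ≤ μ (Fstar j))
    (j : Fin κ) (α : ℝ)
    (hα₁ : sInf {m : ℝ | ∃ k : Fin κ, k ≤ j ∧ m = 𝒜 (Fstar k)ᶜ x} ≤ α)
    (hα₂ : ∀ k : Fin κ, k < j → α < 𝒜 (Fstar k)ᶜ x) :
    gsf 𝓔 𝒜 μ x α = μ (Fstar j) := by
  have hsurj : Set.SurjOn (fun k => (Fstar k)ᶜ) Set.univ 𝓔 := by
    simpa using Finset.surjOn_of_injOn_of_card_le (s := Finset.univ) _ (fun k _ => hFmem k)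
      (compl_injective.comp hFinj).injOn (by simp [hκ])
  have hAj : 𝒜 (Fstar j)ᶜ x ≤ α :=
    apply_le_of_sInf_le_of_forall_lt (fun k => 𝒜 (Fstar k)ᶜ x) j hα₁ hα₂
  refine IsLeast.csInf_eq ⟨⟨(Fstar j)ᶜ, hFmem j, hAj, by rw [compl_compl]⟩, ?_⟩
  rintro _ ⟨E, hE, hAE, rfl⟩
  obtain ⟨k, -, rfl⟩ := hsurj hE
  rw [compl_compl]
  exact hμmono j k (not_lt.1 fun hkj => (hα₂ k hkj).not_ge hAE)

/-- Theorem (gsf2 (i)): for `α ∈ [min_{k ≤ j} A_⟨k⟩, min_{k < j} A_⟨k⟩)`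
(with the minimum over the empty set equal to `+∞`, encoded by the universally
quantified strict upper bounds), `μ_𝒜(x, α) = μ_j = μ(F_j)`. -/
theorem stmt2 {n κ : ℕ} (𝓔 : Finset (Finset (Fin n)))
    (𝒜 : Finset (Fin n) → (Fin n → ℝ) → ℝ) (μ : Finset (Fin n) → ℝ)
    (x : Fin n → ℝ)
    (hempty : ∅ ∈ 𝓔) (hU : (Finset.univ : Finset (Fin n)) ∈ 𝓔)
    (hA : IsFCA n 𝓔 𝒜) (hμ : IsMonMeasure n 𝓔 μ) (hx : ∀ i, 0 ≤ x i)
    (hκ : 𝓔.card = κ)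
    (Fstar : Fin κ → Finset (Fin n))
    (hFmem : ∀ j, (Fstar j)ᶜ ∈ 𝓔) (hFinj : Function.Injective Fstar)
    (hμmono : ∀ i j : Fin κ, i ≤ j → μ (Fstar i) ≤ μ (Fstar j))
    (j : Fin κ) (α : ℝ)
    (hα₁ : sInf {m : ℝ | ∃ k : Fin κ, k ≤ j ∧ m = 𝒜 (Fstar k)ᶜ x} ≤ α)
    (hα₂ : ∀ k : Fin κ, k < j → α < 𝒜 (Fstar k)ᶜ x) :
    gsf 𝓔 𝒜 μ x α = μ (Fstar j) :=
  stmt2_general 𝓔 𝒜 μ x hκ Fstar hFmem hFinj hμmono j α hα₁ hα₂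
end

section
/- For each i ∈ {0,...,κ-1} there exists j ∈ {0,...,κ-1} such that the interval [A_i, A_{i+1}) is contained in the interval [min_{k ≤ j} A_{⟨k⟩}, min_{k < j} A_{⟨k⟩}). -/
open scoped Classical

/-!
Both enumerations list the same values `𝒜(x|E)`, `E ∈ 𝓔`. Take `j` to be the first index with
`A_⟨j⟩ ≤ A_i`. Every earlier `A_⟨k⟩` exceeds `A_i`; being some `A_m`, monotonicity forces
`m > i`, hence `A_⟨k⟩ ≥ A_{i+1}`.
-/

open Set

theorem Finset.range_eq_coe_of_injective_of_card_eq {α : Type*} {s : Finset α} {κ : ℕ}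
    {e : Fin κ → α} (hs : s.card = κ) (he : ∀ k, e k ∈ s) (hinj : Function.Injective e) :
    Set.range e = s := by
  have himage : Finset.univ.image e = s := by
    refine Finset.eq_of_subset_of_card_le (fun a ha => ?_) ?_
    · obtain ⟨k, -, rfl⟩ := Finset.mem_image.mp ha
      exact he k
    · rw [hs, Finset.card_image_of_injective _ hinj, Finset.card_univ, Fintype.card_fin]
  rw [← himage, Finset.coe_image, Finset.coe_univ, image_univ]

theorem exists_first_le_of_range_eq {ι β : Type*} [LinearOrder ι] [WellFoundedLT ι]
    [LinearOrder β] {f g : ι → β} (hfg : range f = range g) (hg : Monotone g) (i : ι) :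
    ∃ j, f j ≤ g i ∧ ∀ k < j, ∃ m, i < m ∧ f k = g m := by
  have hne : {k | f k ≤ g i}.Nonempty := by
    obtain ⟨k, hk⟩ : g i ∈ range f := hfg ▸ mem_range_self i
    exact ⟨k, hk.le⟩
  obtain ⟨j, hj, hmin⟩ := wellFounded_lt.has_min _ hne
  refine ⟨j, hj, fun k hk => ?_⟩
  have hgt : g i < f k := lt_of_not_ge fun hle => hmin k hle hk
  obtain ⟨m, hm⟩ : f k ∈ range g := hfg ▸ mem_range_self k
  exact ⟨m, lt_of_not_ge fun hmi => (hgt.trans_eq hm.symm).not_ge (hg hmi), hm.symm⟩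

theorem stmt6_general {n κ : ℕ} (𝓔 : Finset (Finset (Fin n)))
    (𝒜 : Finset (Fin n) → (Fin n → ℝ) → ℝ)
    (x : Fin n → ℝ)
    (hκ : 𝓔.card = κ)
    (Estar : Fin κ → Finset (Fin n))
    (hmem : ∀ i, Estar i ∈ 𝓔) (hinj : Function.Injective Estar)
    (hAmono : ∀ i j : Fin κ, i ≤ j → 𝒜 (Estar i) x ≤ 𝒜 (Estar j) x)
    (Fstar : Fin κ → Finset (Fin n))
    (hFmem : ∀ j, (Fstar j)ᶜ ∈ 𝓔) (hFinj : Function.Injective Fstar)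
    (i : Fin κ) :
    ∃ j : Fin κ, ∀ α : ℝ,
      (𝒜 (Estar i) x ≤ α ∧ ∀ h : (i : ℕ) + 1 < κ, α < 𝒜 (Estar ⟨(i : ℕ) + 1, h⟩) x) →
      (sInf {m : ℝ | ∃ k : Fin κ, k ≤ j ∧ m = 𝒜 (Fstar k)ᶜ x} ≤ α ∧
        ∀ k : Fin κ, k < j → α < 𝒜 (Fstar k)ᶜ x) := by
  have hrange : range (fun k => 𝒜 (Fstar k)ᶜ x) = range (fun m => 𝒜 (Estar m) x) := by
    change range ((𝒜 · x) ∘ fun k => (Fstar k)ᶜ) = range ((𝒜 · x) ∘ Estar)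
    rw [range_comp, range_comp,
      Finset.range_eq_coe_of_injective_of_card_eq hκ hFmem (compl_injective.comp hFinj),
      Finset.range_eq_coe_of_injective_of_card_eq hκ hmem hinj]
  obtain ⟨j, hj, hbefore⟩ := exists_first_le_of_range_eq hrange (fun a b h => hAmono a b h) i
  refine ⟨j, fun α ⟨hiα, hαnext⟩ => ⟨?_, fun k hk => ?_⟩⟩
  · have hbdd : BddBelow {m : ℝ | ∃ k : Fin κ, k ≤ j ∧ m = 𝒜 (Fstar k)ᶜ x} :=
      ((finite_range fun k => 𝒜 (Fstar k)ᶜ x).subset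
        (by rintro _ ⟨k, -, rfl⟩; exact mem_range_self k)).bddBelow
    exact (csInf_le hbdd ⟨j, le_rfl, rfl⟩).trans (hj.trans hiα)
  · obtain ⟨m, him, hkm⟩ := hbefore k hk
    have hnext : (i : ℕ) + 1 < κ := (Nat.succ_le_of_lt him).trans_lt m.isLt
    calc α < 𝒜 (Estar ⟨(i : ℕ) + 1, hnext⟩) x := hαnext hnext
      _ ≤ 𝒜 (Estar m) x := hAmono _ _ (Nat.succ_le_of_lt him)
      _ = 𝒜 (Fstar k)ᶜ x := hkm.symm

/-- Proposition (porovnanie): for each `i` there is `j` such that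
`[A_i, A_{i+1}) ⊆ [min_{k ≤ j} A_⟨k⟩, min_{k < j} A_⟨k⟩)`
(with `A_κ = +∞` and the minimum over the empty set equal to `+∞`). -/
theorem stmt6 {n κ : ℕ} (𝓔 : Finset (Finset (Fin n)))
    (𝒜 : Finset (Fin n) → (Fin n → ℝ) → ℝ) (μ : Finset (Fin n) → ℝ)
    (x : Fin n → ℝ)
    (hempty : ∅ ∈ 𝓔) (hU : (Finset.univ : Finset (Fin n)) ∈ 𝓔)
    (hA : IsFCA n 𝓔 𝒜) (hμ : IsMonMeasure n 𝓔 μ) (hx : ∀ i, 0 ≤ x i)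
    (hκ : 𝓔.card = κ)
    (Estar : Fin κ → Finset (Fin n))
    (hmem : ∀ i, Estar i ∈ 𝓔) (hinj : Function.Injective Estar)
    (hAmono : ∀ i j : Fin κ, i ≤ j → 𝒜 (Estar i) x ≤ 𝒜 (Estar j) x)
    (Fstar : Fin κ → Finset (Fin n))
    (hFmem : ∀ j, (Fstar j)ᶜ ∈ 𝓔) (hFinj : Function.Injective Fstar)
    (hμmono : ∀ i j : Fin κ, i ≤ j → μ (Fstar i) ≤ μ (Fstar j))
    (i : Fin κ) :
    ∃ j : Fin κ, ∀ α : ℝ,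
      (𝒜 (Estar i) x ≤ α ∧ ∀ h : (i : ℕ) + 1 < κ, α < 𝒜 (Estar ⟨(i : ℕ) + 1, h⟩) x) →
      (sInf {m : ℝ | ∃ k : Fin κ, k ≤ j ∧ m = 𝒜 (Fstar k)ᶜ x} ≤ α ∧
        ∀ k : Fin κ, k < j → α < 𝒜 (Fstar k)ᶜ x) :=
  stmt6_general 𝓔 𝒜 x hκ Estar hmem hinj hAmono Fstar hFmem hFinj i
end

section
/- The generalized Choquet integral satisfies C_𝒜(x, μ) = Σ_{i=0}^{κ-2} μ_{𝐢(i)} (A_{i+1} - A_i) = Σ_{i=0}^{κ-2} A_{i+1} (μ_{𝐢(i)} - μ_{𝐢(i+1)}), where 𝐢(i) = min{(0),...,(i)}. -/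
open scoped Classical

/-- `𝐢(i) = min{(0), …, (i)}` for the permutation `e` of `{0, …, κ-1}`. -/
def iMap {κ : ℕ} (e : Fin κ ≃ Fin κ) (i : Fin κ) : Fin κ :=
  ((Finset.univ.filter fun k => k ≤ i).image e).min'
    ⟨e i, Finset.mem_image_of_mem _ (by simp)⟩

/-- `𝐣(j) = min{⟨0⟩, …, ⟨j⟩}` for the inverse `⟨·⟩ = e.symm`. -/
def jMap {κ : ℕ} (e : Fin κ ≃ Fin κ) (j : Fin κ) : Fin κ :=
  ((Finset.univ.filter fun k => k ≤ j).image e.symm).min'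
    ⟨e.symm j, Finset.mem_image_of_mem _ (by simp)⟩

open MeasureTheory

lemma tele {κ : ℕ} (hκ : 0 < κ) (a b : Fin κ → ℝ)
    (ha : a ⟨0, hκ⟩ = 0) (hb : b ⟨κ-1, by omega⟩ = 0) :
    ∑ i : Fin κ, (if h : (i:ℕ)+1 < κ then b i * (a ⟨(i:ℕ)+1,h⟩ - a i) else 0)
      = ∑ i : Fin κ, (if h : (i:ℕ)+1 < κ then a ⟨(i:ℕ)+1,h⟩ * (b i - b ⟨(i:ℕ)+1,h⟩) else 0) := by
  rw [← sub_eq_zero, ← Finset.sum_sub_distrib]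
  have hp : ∃ p : ℕ → ℝ, (∀ h : 0 < κ, p 0 = a ⟨0,h⟩ * b ⟨0,h⟩) ∧
      (∀ i (h : i < κ), p i = a ⟨i,h⟩ * b ⟨i,h⟩) := by
    refine ⟨fun i => if h : i < κ then a ⟨i,h⟩ * b ⟨i,h⟩ else 0, ?_, ?_⟩
    · intro h; simp [h]
    · intro i h; simp [h]
  obtain ⟨p, -, hp⟩ := hp
  have hterm : ∀ i : Fin κ,
      ((if h : (i:ℕ)+1 < κ then b i * (a ⟨(i:ℕ)+1,h⟩ - a i) else 0)
        - (if h : (i:ℕ)+1 < κ then a ⟨(i:ℕ)+1,h⟩ * (b i - b ⟨(i:ℕ)+1,h⟩) else 0))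
      = (fun j => if h : j+1 < κ then p (j+1) - p j else 0) (i:ℕ) := by
    intro i
    by_cases h : (i:ℕ)+1 < κ
    · simp only [dif_pos h, hp ((i:ℕ)+1) h, hp (i:ℕ) (by omega), Fin.eta]
      ring
    · simp [h]
  rw [Finset.sum_congr rfl (fun i _ => hterm i),
    Fin.sum_univ_eq_sum_range (fun j => if h : j+1 < κ then p (j+1) - p j else 0) κ]
  have hsplit : Finset.range κ = insert (κ-1) (Finset.range (κ-1)) := by
    have h2 : κ = (κ-1) + 1 := by omega
    rw [h2, Finset.range_add_one]; congr 1 <;> omega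
  rw [hsplit, Finset.sum_insert (by simp)]
  simp only [dif_neg (show ¬ (κ-1+1 < κ) by omega)]
  have hc : ∀ j ∈ Finset.range (κ-1),
      (if h : j+1 < κ then p (j+1) - p j else 0) = p (j+1) - p j := by
    intro j hj; simp at hj; rw [dif_pos (by omega)]
  rw [Finset.sum_congr rfl hc, Finset.sum_range_sub p (κ-1)]
  rw [hp (κ-1) (by omega), hp 0 hκ, ha, hb]
  ring


/-- Theorem (vypocetCh (i)): the generalized Choquet integral
`C_𝒜(x,μ) = ∫_0^∞ μ_𝒜(x,α) dα` equals
`Σ_{i=0}^{κ-2} μ_{𝐢(i)} (A_{i+1} - A_i) = Σ_{i=0}^{κ-2} A_{i+1} (μ_{𝐢(i)} - μ_{𝐢(i+1)})`. -/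
theorem stmt12 {n κ : ℕ} (𝓔 : Finset (Finset (Fin n)))
    (𝒜 : Finset (Fin n) → (Fin n → ℝ) → ℝ) (μ : Finset (Fin n) → ℝ)
    (x : Fin n → ℝ)
    (hempty : ∅ ∈ 𝓔) (hU : (Finset.univ : Finset (Fin n)) ∈ 𝓔)
    (hA : IsFCA n 𝓔 𝒜) (hμ : IsMonMeasure n 𝓔 μ) (hx : ∀ i, 0 ≤ x i)
    (hκ : 𝓔.card = κ)
    (Estar : Fin κ → Finset (Fin n))
    (hmem : ∀ i, Estar i ∈ 𝓔) (hinj : Function.Injective Estar)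
    (hAmono : ∀ i j : Fin κ, i ≤ j → 𝒜 (Estar i) x ≤ 𝒜 (Estar j) x)
    (Fstar : Fin κ → Finset (Fin n))
    (hFmem : ∀ j, (Fstar j)ᶜ ∈ 𝓔) (hFinj : Function.Injective Fstar)
    (hμmono : ∀ i j : Fin κ, i ≤ j → μ (Fstar i) ≤ μ (Fstar j))
    (e : Fin κ ≃ Fin κ) (he : ∀ i, Fstar (e i) = (Estar i)ᶜ) :
    (∫ α in Set.Ioi (0 : ℝ), gsf 𝓔 𝒜 μ x α) =
      (∑ i : Fin κ,
        if h : (i : ℕ) + 1 < κ then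
          μ (Fstar (iMap e i)) * (𝒜 (Estar ⟨(i : ℕ) + 1, h⟩) x - 𝒜 (Estar i) x)
        else 0) ∧
    (∫ α in Set.Ioi (0 : ℝ), gsf 𝓔 𝒜 μ x α) =
      (∑ i : Fin κ,
        if h : (i : ℕ) + 1 < κ then
          𝒜 (Estar ⟨(i : ℕ) + 1, h⟩) x *
            (μ (Fstar (iMap e i)) - μ (Fstar (iMap e ⟨(i : ℕ) + 1, h⟩)))
        else 0) := by
  have hκpos : 0 < κ := hκ ▸ Finset.card_pos.mpr ⟨∅, hempty⟩
  set A : Fin κ → ℝ := fun i => 𝒜 (Estar i) x with hAdef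
  -- surjectivity of Estar onto 𝓔
  have hsurj : ∀ E ∈ 𝓔, ∃ i, Estar i = E := by
    intro E hE
    have himg : (Finset.univ.image Estar) = 𝓔 := by
      apply Finset.eq_of_subset_of_card_le
      · intro F hF; simp only [Finset.mem_image] at hF
        obtain ⟨i, -, rfl⟩ := hF; exact hmem i
      · rw [hκ, Finset.card_image_of_injective _ hinj, Finset.card_univ, Fintype.card_fin]
    rw [← himg] at hE
    simp only [Finset.mem_image] at hE
    obtain ⟨i, -, hi⟩ := hE; exact ⟨i, hi⟩
  -- A 0 = 0
  have hA0 : A ⟨0, hκpos⟩ = 0 := by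
    obtain ⟨i0, hi0⟩ := hsurj ∅ hempty
    have h1 : A i0 = 0 := by rw [hAdef]; simp only; rw [hi0]; exact hA.2.2.2 x
    have h2 : A ⟨0, hκpos⟩ ≤ A i0 := hAmono _ _ (by simp [Fin.le_def])
    have h3 : 0 ≤ A ⟨0, hκpos⟩ := hA.1 _ (hmem _) x
    linarith
  have hAnn : ∀ i, 0 ≤ A i := fun i => hA.1 _ (hmem i) x
  have hA0le : ∀ i, A ⟨0, hκpos⟩ ≤ A i := fun i => hAmono _ _ (by simp [Fin.le_def])
  -- μ ∘ Fstar nonneg and μ (Fstar 0) = 0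
  have hμnn : ∀ j, 0 ≤ μ (Fstar j) := by
    intro j
    have := hμ.2.1 _ (hFmem j)
    rwa [compl_compl] at this
  have hμF0 : μ (Fstar ⟨0, hκpos⟩) = 0 := by
    obtain ⟨i0, hi0⟩ := hsurj Finset.univ hU
    have h1 : Fstar (e i0) = ∅ := by rw [he i0, hi0, Finset.compl_univ]
    have h2 : μ (Fstar ⟨0, hκpos⟩) ≤ μ (Fstar (e i0)) :=
      hμmono _ _ (by simp [Fin.le_def])
    rw [h1, hμ.1] at h2
    exact le_antisymm h2 (hμnn _)
  -- iMap at the top is 0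
  have hiMaplast : iMap e ⟨κ-1, by omega⟩ = ⟨0, hκpos⟩ := by
    apply le_antisymm
    · apply Finset.min'_le
      refine Finset.mem_image.mpr ⟨e.symm ⟨0, hκpos⟩, ?_, by simp⟩
      simp only [Finset.mem_filter, Finset.mem_univ, true_and, Fin.le_def]
      have := (e.symm ⟨0, hκpos⟩).isLt
      omega
    · simp [Fin.le_def]
  have hclast : μ (Fstar (iMap e ⟨κ-1, by omega⟩)) = 0 := by rw [hiMaplast, hμF0]
  -- key formula for gsf
  have hgsf : ∀ α : ℝ, ∀ m : Fin κ, A m ≤ α → (∀ j : Fin κ, A j ≤ α → j ≤ m) →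
      gsf 𝓔 𝒜 μ x α = μ (Fstar (iMap e m)) := by
    intro α m hAm hmax
    set T := Finset.univ.filter (fun i : Fin κ => 𝒜 (Estar i) x ≤ α) with hT
    have hmT : m ∈ T := by simp [hT]; exact hAm
    have hset : {r : ℝ | ∃ E ∈ 𝓔, 𝒜 E x ≤ α ∧ r = μ Eᶜ}
        = ↑(T.image fun i => μ (Fstar (e i))) := by
      ext r
      simp only [Set.mem_setOf_eq, Finset.coe_image, Set.mem_image, Finset.mem_coe,
        Finset.mem_filter, Finset.mem_univ, true_and, hT]
      constructor
      · rintro ⟨E, hE, hEα, rfl⟩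
        obtain ⟨i, rfl⟩ := hsurj E hE
        exact ⟨i, hEα, by rw [he i]⟩
      · rintro ⟨i, hi, rfl⟩
        exact ⟨Estar i, hmem i, hi, by rw [he i]⟩
    have hne : (T.image fun i => μ (Fstar (e i))).Nonempty :=
      ⟨_, Finset.mem_image_of_mem _ hmT⟩
    rw [gsf, hset, hne.csInf_eq_min']
    apply le_antisymm
    · apply Finset.min'_le
      -- iMap e m = e i₀ for some i₀ ≤ m
      have hmem' := Finset.min'_mem ((Finset.univ.filter fun k => k ≤ m).image e)
        ⟨e m, Finset.mem_image_of_mem _ (by simp)⟩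
      rw [show ((Finset.univ.filter fun k => k ≤ m).image e).min' _ = iMap e m from rfl]
        at hmem'
      simp only [Finset.mem_image, Finset.mem_filter, Finset.mem_univ, true_and] at hmem'
      obtain ⟨i0, hi0m, hi0⟩ := hmem'
      rw [← hi0]
      apply Finset.mem_image_of_mem
      simp only [hT, Finset.mem_filter, Finset.mem_univ, true_and]
      calc 𝒜 (Estar i0) x ≤ 𝒜 (Estar m) x := hAmono _ _ hi0m
        _ ≤ α := hAm
    · apply Finset.le_min'
      intro r hr
      simp only [Finset.mem_image, hT, Finset.mem_filter, Finset.mem_univ, true_and] at hr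
      obtain ⟨i, hi, rfl⟩ := hr
      have him : iMap e m ≤ e i := by
        apply Finset.min'_le
        apply Finset.mem_image_of_mem
        simp only [Finset.mem_filter, Finset.mem_univ, true_and]
        exact hmax i hi
      exact hμmono _ _ him
  -- the step function
  set f : ℝ → ℝ := fun α => ∑ i : Fin κ,
    if h : (i:ℕ)+1 < κ then
      (Set.Ioo (A i) (A ⟨(i:ℕ)+1, h⟩)).indicator (fun _ => μ (Fstar (iMap e i))) α
    else 0 with hf
  -- pointwise identification off the range of A
  have hpt : ∀ α : ℝ, α ∈ Set.Ioi (0:ℝ) → α ∉ Set.range A → gsf 𝓔 𝒜 μ x α = f α := by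
    intro α hα hαr
    have hα0 : (0:ℝ) < α := hα
    set T := Finset.univ.filter (fun i : Fin κ => A i ≤ α) with hT
    have hTne : T.Nonempty := ⟨⟨0, hκpos⟩, by simp [hT]; linarith [hA0]⟩
    set m := T.max' hTne with hm
    have hAm : A m ≤ α := by
      have := T.max'_mem hTne; simp [hT] at this; exact this
    have hmax : ∀ j : Fin κ, A j ≤ α → j ≤ m := by
      intro j hj; exact T.le_max' j (by simp [hT]; exact hj)
    have hAmlt : A m < α := lt_of_le_of_ne hAm (fun habs => hαr ⟨m, habs⟩)
    rw [hgsf α m hAm hmax, hf]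
    beta_reduce
    by_cases h : (m:ℕ)+1 < κ
    · -- α ∈ Ioo (A m) (A (m+1)) and in no other
      have hgt : α < A ⟨(m:ℕ)+1, h⟩ := by
        by_contra habs
        push_neg at habs
        have := hmax ⟨(m:ℕ)+1, h⟩ habs
        simp [Fin.le_def] at this
      rw [Finset.sum_eq_single m]
      · rw [dif_pos h, Set.indicator_of_mem (Set.mem_Ioo.mpr ⟨hAmlt, hgt⟩)]
      · intro i _ hne
        by_cases h' : (i:ℕ)+1 < κ
        · rw [dif_pos h', Set.indicator_of_notMem]
          rintro ⟨h1, h2⟩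
          rcases lt_or_gt_of_ne hne with hlt | hgt'
          · -- i < m : A (i+1) ≤ A m < α
            have hlt' : (i:ℕ) < (m:ℕ) := Fin.lt_def.mp hlt
            have : A ⟨(i:ℕ)+1, h'⟩ ≤ A m := hAmono _ _ (by rw [Fin.le_def]; exact hlt')
            linarith
          · -- i > m : A i ≥ A (m+1) > α
            have hgt'' : (m:ℕ) < (i:ℕ) := Fin.lt_def.mp hgt'
            have : A ⟨(m:ℕ)+1, h⟩ ≤ A i := hAmono _ _ (by rw [Fin.le_def]; exact hgt'')
            linarith
        · rw [dif_neg h']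
      · intro habs; exact absurd (Finset.mem_univ m) habs
    · -- m is the last index
      have hmval : (m:ℕ) = κ - 1 := by have := m.isLt; omega
      have hmeq : m = ⟨κ-1, by omega⟩ := by apply Fin.ext; exact hmval
      rw [hmeq, hclast]
      symm
      apply Finset.sum_eq_zero
      intro i _
      by_cases h' : (i:ℕ)+1 < κ
      · rw [dif_pos h', Set.indicator_of_notMem]
        rintro ⟨h1, h2⟩
        have : A ⟨(i:ℕ)+1, h'⟩ ≤ A m := hAmono _ _ (by rw [Fin.le_def, hmval]; omega)
        linarith
      · rw [dif_neg h']
  -- a.e. equality on Ioi 0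
  have hae : (fun α => gsf 𝓔 𝒜 μ x α) =ᵐ[volume.restrict (Set.Ioi (0:ℝ))] f := by
    have hr0 : (volume.restrict (Set.Ioi (0:ℝ))) (Set.range A) = 0 :=
      (Set.finite_range A).measure_zero _
    have h1 : ∀ᵐ α ∂(volume.restrict (Set.Ioi (0:ℝ))), α ∉ Set.range A :=
      measure_eq_zero_iff_ae_notMem.mp hr0
    have h2 : ∀ᵐ α ∂(volume.restrict (Set.Ioi (0:ℝ))), α ∈ Set.Ioi (0:ℝ) :=
      ae_restrict_mem measurableSet_Ioi
    filter_upwards [h1, h2] with α hα1 hα2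
    exact hpt α hα2 hα1
  have hint : (∫ α in Set.Ioi (0:ℝ), gsf 𝓔 𝒜 μ x α) =
      (∑ i : Fin κ,
        if h : (i : ℕ) + 1 < κ then
          μ (Fstar (iMap e i)) * (𝒜 (Estar ⟨(i : ℕ) + 1, h⟩) x - 𝒜 (Estar i) x)
        else 0) := by
    rw [integral_congr_ae hae, hf]
    rw [integral_finset_sum]
    · apply Finset.sum_congr rfl
      intro i _
      by_cases h : (i:ℕ)+1 < κ
      · simp only [dif_pos h]
        rw [integral_indicator measurableSet_Ioo,
          Measure.restrict_restrict measurableSet_Ioo]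
        have hsub : Set.Ioo (A i) (A ⟨(i:ℕ)+1, h⟩) ∩ Set.Ioi 0
            = Set.Ioo (A i) (A ⟨(i:ℕ)+1, h⟩) := by
          apply Set.inter_eq_self_of_subset_left
          intro y hy; exact lt_of_le_of_lt (hAnn i) hy.1
        rw [hsub, setIntegral_const,
          Real.volume_real_Ioo_of_le (by linarith [hAmono i ⟨(i:ℕ)+1, h⟩ (by simp [Fin.le_def])]),
          smul_eq_mul]
        ring
      · simp only [dif_neg h, integral_zero]
    · intro i _
      by_cases h : (i:ℕ)+1 < κ
      · simp only [dif_pos h]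
        exact (((integrable_indicator_iff measurableSet_Ioo).2
          (integrableOn_const (C := μ (Fstar (iMap e i)))
            measure_Ioo_lt_top.ne))).restrict
      · simp only [dif_neg h]
        exact integrable_zero _ _ _
  refine ⟨hint, ?_⟩
  rw [hint]
  exact tele hκpos A (fun i => μ (Fstar (iMap e i))) hA0 hclast
end

section
/- The generalized survival function equals μ_j exactly on the interval [min_{k ≤ φ*(j)} A_{⟨k⟩}, min_{k < φ_*(j)} A_{⟨k⟩}): that is, μ_𝒜(x, α) = μ_j for all α in this interval, and for α outside it with α ≥ 0, μ_𝒜(x, α) ≠ μ_j whenever μ_j differs from the other measure values involved. In particular the value μ_j is attained by μ_𝒜(x, ·) if and only if min_{k ≤ φ*(j)} A_{⟨k⟩} < min_{k < φ_*(j)} A_{⟨k⟩}. -/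
open scoped Classical

/-- `φ*(j) = max{k : μ_k = μ_j}`. -/
noncomputable def phiStar {κ : ℕ} (μ : Fin κ → ℝ) (j : Fin κ) : Fin κ :=
  (Finset.univ.filter fun k => μ k = μ j).max' ⟨j, by simp⟩

/-- `φ_*(j) = min{k : μ_k = μ_j}`. -/
noncomputable def phiLow {κ : ℕ} (μ : Fin κ → ℝ) (j : Fin κ) : Fin κ :=
  (Finset.univ.filter fun k => μ k = μ j).min' ⟨j, by simp⟩

/-! Reindexing `𝓔` by the bijection `k ↦ (F k)ᶜ` turns `μ_𝒜(x, α)` into the minimum of the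
nondecreasing sequence `μ_k` over `{k | A_⟨k⟩ ≤ α}`, i.e. its value at the least such `k`. This
value is `μ_j` iff that least index lies in `[φ_*(j), φ*(j)]`, which is exactly the condition
`min_{k ≤ φ*(j)} A_⟨k⟩ ≤ α < min_{k < φ_*(j)} A_⟨k⟩`. For `α ≥ 0` the index set is nonempty
because `𝒜(x|∅) = 0`, and since every `A_⟨k⟩ ≥ 0` the interval lies in `[0, ∞)`. -/

lemma phiStar_spec {κ : ℕ} (μ : Fin κ → ℝ) (j : Fin κ) : μ (phiStar μ j) = μ j :=
  (Finset.mem_filter.mp (Finset.max'_mem (Finset.univ.filter fun k => μ k = μ j) _)).2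

lemma le_phiStar {κ : ℕ} (μ : Fin κ → ℝ) {j k : Fin κ} (h : μ k = μ j) : k ≤ phiStar μ j :=
  Finset.le_max' _ _ (by simp [h])

lemma phiLow_spec {κ : ℕ} (μ : Fin κ → ℝ) (j : Fin κ) : μ (phiLow μ j) = μ j :=
  (Finset.mem_filter.mp (Finset.min'_mem (Finset.univ.filter fun k => μ k = μ j) _)).2

lemma phiLow_le {κ : ℕ} (μ : Fin κ → ℝ) {j k : Fin κ} (h : μ k = μ j) : phiLow μ j ≤ k :=
  Finset.min'_le _ _ (by simp [h])

lemma eq_iff_phiLow_le_and_le_phiStar {κ : ℕ} {μ : Fin κ → ℝ} (hμ : Monotone μ) {j k : Fin κ} :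
    μ k = μ j ↔ phiLow μ j ≤ k ∧ k ≤ phiStar μ j := by
  refine ⟨fun h => ⟨phiLow_le μ h, le_phiStar μ h⟩, fun ⟨hlow, hstar⟩ => le_antisymm ?_ ?_⟩
  · exact phiStar_spec μ j ▸ hμ hstar
  · exact phiLow_spec μ j ▸ hμ hlow

lemma csInf_setOf_le_iff {ι : Type*} [Finite ι] {p : ι → Prop} (f : ι → ℝ) (hp : ∃ i, p i)
    {α : ℝ} : sInf {v | ∃ i, p i ∧ v = f i} ≤ α ↔ ∃ i, p i ∧ f i ≤ α := by
  have hfin : {v | ∃ i, p i ∧ v = f i}.Finite :=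
    (Set.finite_range f).subset fun _ ⟨i, _, hv⟩ => ⟨i, hv.symm⟩
  obtain ⟨i, hi⟩ := hp
  have hne : {v | ∃ i, p i ∧ v = f i}.Nonempty := ⟨f i, i, hi, rfl⟩
  constructor
  · intro h
    obtain ⟨i, hi, hv⟩ := hne.csInf_mem hfin
    exact ⟨i, hi, hv ▸ h⟩
  · rintro ⟨i, hi, hle⟩
    exact (csInf_le hfin.bddBelow ⟨i, hi, rfl⟩).trans hle

lemma sInf_image_setOf_le_eq_iff {κ : ℕ} {μ a : Fin κ → ℝ} (hμ : Monotone μ) {α : ℝ}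
    (hα : ∃ k, a k ≤ α) (j : Fin κ) :
    sInf (μ '' {k | a k ≤ α}) = μ j ↔
      (∃ k ≤ phiStar μ j, a k ≤ α) ∧ ∀ k < phiLow μ j, α < a k := by
  obtain ⟨k₀, hk₀⟩ : ∃ k₀, IsLeast {k | a k ≤ α} k₀ :=
    ⟨_, wellFounded_lt.min_mem _ hα, fun _ hk => wellFounded_lt.min_le hk⟩
  rw [(hμ.map_isLeast hk₀).csInf_eq, eq_iff_phiLow_le_and_le_phiStar hμ, and_comm]
  refine and_congr ⟨fun h => ⟨k₀, h, hk₀.1⟩, fun ⟨k, hk, hak⟩ => (hk₀.2 hak).trans hk⟩ ⟨?_, ?_⟩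
  · exact fun h k hk => lt_of_not_ge fun hak => (hk.trans_le h).not_ge (hk₀.2 hak)
  · exact fun h => not_lt.1 fun hlt => (h k₀ hlt).not_ge hk₀.1

section Reindexing

variable {n κ : ℕ} {𝓔 : Finset (Finset (Fin n))} {F : Fin κ → Finset (Fin n)}

lemma exists_compl_eq_of_card_eq (hκ : 𝓔.card = κ) (hFmem : ∀ k, (F k)ᶜ ∈ 𝓔)
    (hFinj : Function.Injective F) {E : Finset (Fin n)} (hE : E ∈ 𝓔) : ∃ k, (F k)ᶜ = E := by
  obtain ⟨k, -, hk⟩ := Finset.surj_on_of_inj_on_of_card_le (s := Finset.univ)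
    (fun k _ => (F k)ᶜ) (fun k _ => hFmem k) (fun _ _ _ _ h => hFinj (compl_injective h))
    (by simp [hκ]) E hE
  exact ⟨k, hk.symm⟩

lemma gsf_eq_sInf_image (𝒜 : Finset (Fin n) → (Fin n → ℝ) → ℝ) (μ : Finset (Fin n) → ℝ)
    (x : Fin n → ℝ) (hκ : 𝓔.card = κ) (hFmem : ∀ k, (F k)ᶜ ∈ 𝓔)
    (hFinj : Function.Injective F) (α : ℝ) :
    gsf 𝓔 𝒜 μ x α = sInf ((fun k => μ (F k)) '' {k | 𝒜 (F k)ᶜ x ≤ α}) := by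
  unfold gsf
  congr 1
  ext v
  constructor
  · rintro ⟨E, hE, hle, rfl⟩
    obtain ⟨k, rfl⟩ := exists_compl_eq_of_card_eq hκ hFmem hFinj hE
    exact ⟨k, hle, by rw [compl_compl]⟩
  · rintro ⟨k, hle, rfl⟩
    exact ⟨(F k)ᶜ, hFmem k, hle, by rw [compl_compl]⟩

end Reindexing

theorem stmt17_general {n κ : ℕ} (𝓔 : Finset (Finset (Fin n)))
    (𝒜 : Finset (Fin n) → (Fin n → ℝ) → ℝ) (μ : Finset (Fin n) → ℝ)
    (x : Fin n → ℝ)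
    (hempty : ∅ ∈ 𝓔)
    (hA : IsFCA n 𝓔 𝒜)
    (hκ : 𝓔.card = κ)
    (Fstar : Fin κ → Finset (Fin n))
    (hFmem : ∀ j, (Fstar j)ᶜ ∈ 𝓔) (hFinj : Function.Injective Fstar)
    (hμmono : ∀ i j : Fin κ, i ≤ j → μ (Fstar i) ≤ μ (Fstar j))
    (j : Fin κ) :
    (∀ α : ℝ,
        sInf {m : ℝ | ∃ k : Fin κ, k ≤ phiStar (fun k => μ (Fstar k)) j ∧
            m = 𝒜 (Fstar k)ᶜ x} ≤ α →
        (∀ k : Fin κ, k < phiLow (fun k => μ (Fstar k)) j → α < 𝒜 (Fstar k)ᶜ x) →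
        gsf 𝓔 𝒜 μ x α = μ (Fstar j)) ∧
    (∀ α : ℝ, 0 ≤ α → gsf 𝓔 𝒜 μ x α = μ (Fstar j) →
        sInf {m : ℝ | ∃ k : Fin κ, k ≤ phiStar (fun k => μ (Fstar k)) j ∧
            m = 𝒜 (Fstar k)ᶜ x} ≤ α ∧
        ∀ k : Fin κ, k < phiLow (fun k => μ (Fstar k)) j → α < 𝒜 (Fstar k)ᶜ x) ∧
    ((∃ α : ℝ, 0 ≤ α ∧ gsf 𝓔 𝒜 μ x α = μ (Fstar j)) ↔
      ∃ α : ℝ,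
        sInf {m : ℝ | ∃ k : Fin κ, k ≤ phiStar (fun k => μ (Fstar k)) j ∧
            m = 𝒜 (Fstar k)ᶜ x} ≤ α ∧
        ∀ k : Fin κ, k < phiLow (fun k => μ (Fstar k)) j → α < 𝒜 (Fstar k)ᶜ x) := by
  have hsInf_le {α : ℝ} : sInf {m : ℝ | ∃ k : Fin κ, k ≤ phiStar (fun k => μ (Fstar k)) j ∧
      m = 𝒜 (Fstar k)ᶜ x} ≤ α ↔
        ∃ k ≤ phiStar (fun k => μ (Fstar k)) j, 𝒜 (Fstar k)ᶜ x ≤ α :=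
    csInf_setOf_le_iff _ ⟨j, le_phiStar _ rfl⟩
  have hnonneg {α : ℝ} (h : sInf {m : ℝ | ∃ k : Fin κ, k ≤ phiStar (fun k => μ (Fstar k)) j ∧
      m = 𝒜 (Fstar k)ᶜ x} ≤ α) : 0 ≤ α := by
    obtain ⟨k, -, hak⟩ := hsInf_le.1 h
    exact (hA.1 _ (hFmem k) x).trans hak
  obtain ⟨k₀, hk₀⟩ := exists_compl_eq_of_card_eq hκ hFmem hFinj hempty
  have hiff (α : ℝ) (hα : 0 ≤ α) : gsf 𝓔 𝒜 μ x α = μ (Fstar j) ↔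
      sInf {m : ℝ | ∃ k : Fin κ, k ≤ phiStar (fun k => μ (Fstar k)) j ∧
        m = 𝒜 (Fstar k)ᶜ x} ≤ α ∧
      ∀ k < phiLow (fun k => μ (Fstar k)) j, α < 𝒜 (Fstar k)ᶜ x := by
    have hk₀α : 𝒜 (Fstar k₀)ᶜ x ≤ α := by rw [hk₀, hA.2.2.2]; exact hα
    rw [gsf_eq_sInf_image 𝒜 μ x hκ hFmem hFinj, hsInf_le]
    exact sInf_image_setOf_le_eq_iff (fun _ _ h => hμmono _ _ h) ⟨k₀, hk₀α⟩ j
  exact ⟨fun α h1 h2 => (hiff α (hnonneg h1)).2 ⟨h1, h2⟩, fun α hα => (hiff α hα).1,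
    fun ⟨α, hα, h⟩ => ⟨α, (hiff α hα).1 h⟩,
    fun ⟨α, h1, h2⟩ => ⟨α, hnonneg h1, (hiff α (hnonneg h1)).2 ⟨h1, h2⟩⟩⟩

/-- Proposition (najgsf): `μ_𝒜(x,·)` equals `μ_j` exactly on
`[min_{k ≤ φ*(j)} A_⟨k⟩, min_{k < φ_*(j)} A_⟨k⟩)` (min over the empty set `= +∞`),
and in particular the value `μ_j` is attained iff this interval is nonempty, i.e.
iff `min_{k ≤ φ*(j)} A_⟨k⟩ < min_{k < φ_*(j)} A_⟨k⟩`. -/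
theorem stmt17 {n κ : ℕ} (𝓔 : Finset (Finset (Fin n)))
    (𝒜 : Finset (Fin n) → (Fin n → ℝ) → ℝ) (μ : Finset (Fin n) → ℝ)
    (x : Fin n → ℝ)
    (hempty : ∅ ∈ 𝓔) (hU : (Finset.univ : Finset (Fin n)) ∈ 𝓔)
    (hA : IsFCA n 𝓔 𝒜) (hμ : IsMonMeasure n 𝓔 μ) (hx : ∀ i, 0 ≤ x i)
    (hκ : 𝓔.card = κ)
    (Fstar : Fin κ → Finset (Fin n))
    (hFmem : ∀ j, (Fstar j)ᶜ ∈ 𝓔) (hFinj : Function.Injective Fstar)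
    (hμmono : ∀ i j : Fin κ, i ≤ j → μ (Fstar i) ≤ μ (Fstar j))
    (j : Fin κ) :
    (∀ α : ℝ,
        sInf {m : ℝ | ∃ k : Fin κ, k ≤ phiStar (fun k => μ (Fstar k)) j ∧
            m = 𝒜 (Fstar k)ᶜ x} ≤ α →
        (∀ k : Fin κ, k < phiLow (fun k => μ (Fstar k)) j → α < 𝒜 (Fstar k)ᶜ x) →
        gsf 𝓔 𝒜 μ x α = μ (Fstar j)) ∧
    (∀ α : ℝ, 0 ≤ α → gsf 𝓔 𝒜 μ x α = μ (Fstar j) →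
        sInf {m : ℝ | ∃ k : Fin κ, k ≤ phiStar (fun k => μ (Fstar k)) j ∧
            m = 𝒜 (Fstar k)ᶜ x} ≤ α ∧
        ∀ k : Fin κ, k < phiLow (fun k => μ (Fstar k)) j → α < 𝒜 (Fstar k)ᶜ x) ∧
    ((∃ α : ℝ, 0 ≤ α ∧ gsf 𝓔 𝒜 μ x α = μ (Fstar j)) ↔
      ∃ α : ℝ,
        sInf {m : ℝ | ∃ k : Fin κ, k ≤ phiStar (fun k => μ (Fstar k)) j ∧
            m = 𝒜 (Fstar k)ᶜ x} ≤ α ∧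
        ∀ k : Fin κ, k < phiLow (fun k => μ (Fstar k)) j → α < 𝒜 (Fstar k)ᶜ x) :=
  stmt17_general 𝓔 𝒜 μ x hempty hA hκ Fstar hFmem hFinj hμmono j
end
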